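/- Let λ > 0 and let φ ∈ H_0^1∖{0} be an eigenfunction of T_ν with eigenvalue λ, i.e. ∫ f·φ dν = λ·∫ ∇f·∇φ dΛ for all f ∈ H_0^1. Then φ is affine on each connected component of [0,1]∖supp(ν) (Proposition 5.3). -/

import Mathlib

open MeasureTheory Filter
open scoped ENNReal

noncomputable section

/-- The topological support of a Borel measure on `ℝ`: the set of points all of whose
open neighbourhoods have positive measure. -/
def msupport (ν : Measure ℝ) : Set ℝ :=
  {x : ℝ | ∀ U : Set ℝ, IsOpen U → x ∈ U → 0 < ν U}

/-- `f ∈ H_0^1` with (weak) derivative `g ∈ L^2((0,1),Λ)`: on `[0,1]` one has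
`f x = f 0 + ∫_0^x g dΛ` with `f 0 = 0`, and `f 1 = 0`. -/
def IsH01 (f g : ℝ → ℝ) : Prop :=
  MemLp g 2 (volume.restrict (Set.Ioo 0 1)) ∧
    (∀ x ∈ Set.Icc (0 : ℝ) 1, f x = ∫ t in (0 : ℝ)..x, g t) ∧ f 1 = 0

/-- `f` is affine on each connected component of `[0,1] ∖ supp ν`. -/
def AffineOnComponents (ν : Measure ℝ) (f : ℝ → ℝ) : Prop :=
  ∀ x ∈ Set.Icc (0 : ℝ) 1 \ msupport ν, ∃ c d : ℝ,
    ∀ y ∈ connectedComponentIn (Set.Icc (0 : ℝ) 1 \ msupport ν) x, f y = c * y + d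

/-!
Testing the eigenvalue equation against the tent function with peak `1` at `t` and support
`[s, u]`, where `(s, u)` is a `ν`-null interval, kills the left-hand side, while the right-hand
side is `λ` times the difference of the difference quotients of `φ` on `[s, t]` and `[t, u]`.
Hence any three points of a component of `[0,1] ∖ supp ν` have collinear images under `φ`.
-/

open Set

lemma msupport_eq_support (ν : Measure ℝ) : msupport ν = ν.support := by
  rw [Measure.support_eq_forall_isOpen]
  ext x
  exact forall_congr' fun _ => Imp.swap

lemma exists_affine_of_collinear {S : Set ℝ} {φ : ℝ → ℝ}
    (h : ∀ a ∈ S, ∀ r ∈ S, ∀ b ∈ S, a < r → r < b →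
      (b - r) * (φ r - φ a) = (r - a) * (φ b - φ r)) :
    ∃ c d : ℝ, ∀ y ∈ S, φ y = c * y + d := by
  rcases S.subsingleton_or_nontrivial with hS | hS
  · rcases hS.eq_empty_or_singleton with rfl | ⟨x, rfl⟩
    · exact ⟨0, 0, by simp⟩
    · exact ⟨0, φ x, by simp⟩
  obtain ⟨p, hp, q, hq, hpq⟩ := hS.exists_lt
  have collinear : ∀ y ∈ S, (q - p) * (φ y - φ p) = (y - p) * (φ q - φ p) := by
    intro y hy
    rcases lt_trichotomy y p with hyp | rfl | hpy
    · linear_combination -h y hy p hp q hq hyp hpq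
    · ring
    rcases lt_trichotomy y q with hyq | rfl | hqy
    · linear_combination h p hp y hy q hq hpy hyq
    · ring
    · linear_combination -h p hp q hq y hy hpq hqy
  have hqp : q - p ≠ 0 := sub_ne_zero.mpr hpq.ne'
  refine ⟨(φ q - φ p) / (q - p), φ p - (φ q - φ p) / (q - p) * p, fun y hy => ?_⟩
  field_simp
  linear_combination collinear y hy

lemma intervalIntegral_indicator_Ioo_eq_zero {a x p q : ℝ} (c : ℝ) (ha : a ≤ p) (hx : x ≤ p) :
    ∫ τ in a..x, (Ioo p q).indicator (fun _ => c) τ = 0 := by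
  rw [intervalIntegral.integral_congr (g := fun _ => 0), intervalIntegral.integral_zero]
  intro τ hτ
  exact indicator_of_notMem (fun hτ' => hτ'.1.not_ge (hτ.2.trans (max_le ha hx))) _

lemma intervalIntegral_indicator_Ioo_eq {a x p q : ℝ} (c : ℝ) (ha : a ≤ p) (hpq : p ≤ q)
    (hx : q ≤ x) :
    ∫ τ in a..x, (Ioo p q).indicator (fun _ => c) τ = c * (q - p) := by
  have hIoo : Ioo p q ∩ Ioc a x = Ioo p q :=
    inter_eq_self_of_subset_left fun τ hτ => ⟨ha.trans_lt hτ.1, hτ.2.le.trans hx⟩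
  rw [intervalIntegral.integral_of_le (ha.trans (hpq.trans hx)),
    integral_indicator measurableSet_Ioo, Measure.restrict_restrict measurableSet_Ioo, hIoo,
    setIntegral_const, Real.volume_real_Ioo_of_le hpq, smul_eq_mul, mul_comm]

lemma IsH01.sub_eq_setIntegral {φ g : ℝ → ℝ} (hφ : IsH01 φ g) {a b : ℝ} (ha : 0 ≤ a)
    (hab : a ≤ b) (hb : b ≤ 1) :
    φ b - φ a = ∫ x in Ioo a b, g x := by
  have hg : IntegrableOn g (Ioo 0 1) :=
    memLp_one_iff_integrable.mp (hφ.1.mono_exponent (by norm_num))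
  have hg' : ∀ c ∈ Icc (0 : ℝ) 1, IntervalIntegrable g volume 0 c := fun c hc =>
    (intervalIntegrable_iff_integrableOn_Ioo_of_le hc.1).mpr
      (hg.mono_set (Ioo_subset_Ioo_right hc.2))
  rw [hφ.2.1 b ⟨ha.trans hab, hb⟩, hφ.2.1 a ⟨ha, hab.trans hb⟩,
    intervalIntegral.integral_interval_sub_left (hg' b ⟨ha.trans hab, hb⟩)
      (hg' a ⟨ha, hab.trans hb⟩),
    intervalIntegral.integral_of_le hab, integral_Ioc_eq_integral_Ioo]

def tentDeriv (s t u : ℝ) : ℝ → ℝ :=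
  (Ioo s t).indicator (fun _ => (t - s)⁻¹) - (Ioo t u).indicator (fun _ => (u - t)⁻¹)

def tent (s t u x : ℝ) : ℝ := ∫ τ in (0 : ℝ)..x, tentDeriv s t u τ

section Tent

variable {s t u : ℝ}

lemma tent_eq_zero_of_notMem (hs : 0 ≤ s) (hst : s < t) (htu : t < u) {x : ℝ}
    (hx : x ∉ Ioo s u) : tent s t u x = 0 := by
  have hint : ∀ p q c : ℝ, IntervalIntegrable ((Ioo p q).indicator fun _ => c) volume 0 x :=
    fun p q c => (integrable_indicator_iff measurableSet_Ioo |>.mpr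
      (integrableOn_const measure_Ioo_lt_top.ne)).intervalIntegrable
  simp only [tent, tentDeriv, Pi.sub_apply]
  rw [intervalIntegral.integral_sub (hint _ _ _) (hint _ _ _)]
  rcases le_or_gt x s with hxs | hsx
  · rw [intervalIntegral_indicator_Ioo_eq_zero _ hs hxs,
      intervalIntegral_indicator_Ioo_eq_zero _ (hs.trans hst.le) (hxs.trans hst.le), sub_zero]
  · have hux : u ≤ x := not_lt.mp fun hxu => hx ⟨hsx, hxu⟩
    rw [intervalIntegral_indicator_Ioo_eq _ hs hst.le (htu.le.trans hux),
      intervalIntegral_indicator_Ioo_eq _ (hs.trans hst.le) htu.le hux]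
    field_simp [(sub_pos.mpr hst).ne', (sub_pos.mpr htu).ne']
    ring

lemma isH01_tent (hs : 0 ≤ s) (hst : s < t) (htu : t < u) (hu : u ≤ 1) :
    IsH01 (tent s t u) (tentDeriv s t u) :=
  ⟨(memLp_indicator_const 2 measurableSet_Ioo _ (Or.inr measure_Ioo_lt_top.ne)).sub
      (memLp_indicator_const 2 measurableSet_Ioo _ (Or.inr measure_Ioo_lt_top.ne)),
    fun _ _ => rfl, tent_eq_zero_of_notMem hs hst htu fun h => h.2.not_ge hu⟩

lemma integral_tent_mul_eq_zero {ν : Measure ℝ} (hs : 0 ≤ s) (hst : s < t) (htu : t < u)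
    (hν : ν (Ioo s u) = 0) (φ : ℝ → ℝ) :
    ∫ x, tent s t u x * φ x ∂ν = 0 := by
  refine integral_eq_zero_of_ae (measure_mono_null (fun x hx => ?_) hν)
  by_contra hxsu
  exact hx (by simp [tent_eq_zero_of_notMem hs hst htu hxsu])

lemma setIntegral_tentDeriv_mul {φ g : ℝ → ℝ} (hφ : IsH01 φ g) (hs : 0 ≤ s) (hst : s < t)
    (htu : t < u) (hu : u ≤ 1) :
    ∫ x in Ioo 0 1, tentDeriv s t u x * g x =
      (t - s)⁻¹ * (φ t - φ s) - (u - t)⁻¹ * (φ u - φ t) := by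
  have hg : Integrable g (volume.restrict (Ioo 0 1)) :=
    memLp_one_iff_integrable.mp (hφ.1.mono_exponent (by norm_num))
  have hst' : Ioo s t ⊆ Ioo 0 1 := Ioo_subset_Ioo hs (htu.le.trans hu)
  have htu' : Ioo t u ⊆ Ioo 0 1 := Ioo_subset_Ioo (hs.trans hst.le) hu
  simp only [tentDeriv, Pi.sub_apply, sub_mul, ← indicator_mul_left]
  rw [integral_sub ((hg.const_mul _).indicator measurableSet_Ioo)
      ((hg.const_mul _).indicator measurableSet_Ioo),
    integral_indicator measurableSet_Ioo, integral_indicator measurableSet_Ioo,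
    Measure.restrict_restrict measurableSet_Ioo, Measure.restrict_restrict measurableSet_Ioo,
    inter_eq_self_of_subset_left hst', inter_eq_self_of_subset_left htu',
    integral_const_mul, integral_const_mul, hφ.sub_eq_setIntegral hs hst.le (htu.le.trans hu),
    hφ.sub_eq_setIntegral (hs.trans hst.le) htu.le hu]

end Tent

lemma collinear_of_measure_Ioo_eq_zero {ν : Measure ℝ} {φ g : ℝ → ℝ} (hφ : IsH01 φ g)
    {lam : ℝ} (hlam : lam ≠ 0)
    (heig : ∀ f gf : ℝ → ℝ, IsH01 f gf →
      ∫ x, f x * φ x ∂ν = lam * ∫ x in Ioo (0 : ℝ) 1, gf x * g x)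
    {s t u : ℝ} (hs : 0 ≤ s) (hst : s < t) (htu : t < u) (hu : u ≤ 1)
    (hν : ν (Ioo s u) = 0) :
    (u - t) * (φ t - φ s) = (t - s) * (φ u - φ t) := by
  have h := heig _ _ (isH01_tent hs hst htu hu)
  rw [integral_tent_mul_eq_zero hs hst htu hν, setIntegral_tentDeriv_mul hφ hs hst htu hu,
    eq_comm, mul_eq_zero, or_iff_right hlam, sub_eq_zero] at h
  field_simp [(sub_pos.mpr hst).ne', (sub_pos.mpr htu).ne'] at h
  linear_combination h

theorem statement14_general (ν : Measure ℝ)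
    (φ gφ : ℝ → ℝ) (hφ : IsH01 φ gφ)
    (lam : ℝ) (hlam : 0 < lam)
    (heig : ∀ f gf : ℝ → ℝ, IsH01 f gf →
      ∫ x, f x * φ x ∂ν = lam * ∫ x in Set.Ioo (0 : ℝ) 1, gf x * gφ x) :
    AffineOnComponents ν φ := by
  intro x _
  set K := connectedComponentIn (Icc 0 1 \ msupport ν) x
  have hK : K ⊆ Icc 0 1 \ ν.support := msupport_eq_support ν ▸ connectedComponentIn_subset _ _
  have hKo : K.OrdConnected := isPreconnected_connectedComponentIn.ordConnected
  refine exists_affine_of_collinear fun a ha r _ b hb har hrb => ?_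
  have hν : ν (Ioo a b) = 0 := measure_mono_null Ioo_subset_Icc_self <|
    Measure.measure_eq_zero_of_isCompact_subset_compl_support isCompact_Icc
      fun z hz => (hK (hKo.out ha hb hz)).2
  exact collinear_of_measure_Ioo_eq_zero hφ hlam.ne' heig (hK ha).1.1 har hrb (hK hb).1.2 hν

/-- **Proposition 5.3**: if `λ > 0` and `φ ∈ H_0^1 ∖ {0}` is an eigenfunction of
`T_ν` with eigenvalue `λ`, i.e. `∫ f·φ dν = λ ∫ ∇f·∇φ dΛ` for all `f ∈ H_0^1`, then
`φ` is affine on each connected component of `[0,1] ∖ supp ν`. -/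
theorem statement14 (ν : Measure ℝ) [IsFiniteMeasure ν] (hν0 : ν ≠ 0)
    (hνs : ν (Set.Ioo (0 : ℝ) 1)ᶜ = 0)
    (φ gφ : ℝ → ℝ) (hφ : IsH01 φ gφ)
    (hφne : ∃ x ∈ Set.Icc (0 : ℝ) 1, φ x ≠ 0) (lam : ℝ) (hlam : 0 < lam)
    (heig : ∀ f gf : ℝ → ℝ, IsH01 f gf →
      ∫ x, f x * φ x ∂ν = lam * ∫ x in Set.Ioo (0 : ℝ) 1, gf x * gφ x) :
    AffineOnComponents ν φ :=
  statement14_general ν φ gφ hφ lam hlam heig
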